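/- Let A be a (2a)×(2a) rational matrix and N a (2n)×(2n) rational matrix. Suppose that N is rationally null-cobordant, that the block sum A ⊞ N is rationally null-cobordant, and that there exist λ, μ ∈ ℚ such that det(λN + μNᵀ) ≠ 0. Then A is rationally null-cobordant. -/

import Mathlib

open Matrix

/-- A square matrix over a commutative ring is *null-cobordant* if its size is even,
say `n = 2 * r`, and it is congruent, via a matrix `P` with unit determinant, to a
block matrix whose upper-left `r × r` block is zero. -/
def Matrix.IsNullCobordant {R : Type*} [CommRing R] {n : ℕ}
    (A : Matrix (Fin n) (Fin n) R) : Prop :=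
  ∃ r : ℕ, n = 2 * r ∧ ∃ P : Matrix (Fin n) (Fin n) R, IsUnit P.det ∧
    ∀ i j : Fin n, (i : ℕ) < r → (j : ℕ) < r → (Pᵀ * A * P) i j = 0

/-- The block sum `A ⊞ B` of square matrices: the block-diagonal matrix `[[A,0],[0,B]]`. -/
def Matrix.blockSum {R : Type*} [CommRing R] {p q : ℕ}
    (A : Matrix (Fin p) (Fin p) R) (B : Matrix (Fin q) (Fin q) R) :
    Matrix (Fin (p + q)) (Fin (p + q)) R :=
  Matrix.reindex finSumFinEquiv finSumFinEquiv (Matrix.fromBlocks A 0 0 B)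

/-! A `2r × 2r` matrix is null-cobordant exactly when its bilinear form is metabolic, i.e. has a
totally isotropic subspace of dimension at least `r`. Let `H` be a metabolizer of `β ⊕ γ` (the
form of `A ⊞ N` on `V × W`) and `U` one of `γ`. The vectors of `H` whose `W`-part lies in `U`
project to a totally isotropic subspace of `V`; projecting loses at most
`D = {w ∈ U | (0, w) ∈ H}`. This loss is paid for by the form `τ = λγ + μγᵀ`: both `H` and
`V × U` lie in `V × D^⊥τ`, and nondegeneracy of `τ` gives `dim D^⊥τ = dim W - dim D`, so
`dim (H + V × U)` is small and hence `dim (H ∩ V × U)` is large. -/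

open Module Submodule
open LinearMap (BilinForm)

namespace Submodule

variable {F V W : Type*} [Field F] [AddCommGroup V] [Module F V] [AddCommGroup W] [Module F W]
  [FiniteDimensional F V] [FiniteDimensional F W]

lemma finrank_prod (p : Submodule F V) (q : Submodule F W) :
    finrank F (p.prod q) = finrank F p + finrank F q := by
  have h := LinearMap.finrank_range_of_inj (f := p.subtype.prodMap q.subtype)
    (Prod.map_injective.2 ⟨p.injective_subtype, q.injective_subtype⟩)
  rwa [LinearMap.range_prodMap, range_subtype, range_subtype, Module.finrank_prod] at h

lemma finrank_le_finrank_map_fst_add_finrank_comap_inr (X : Submodule F (V × W)) :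
    finrank F X ≤
      finrank F (X.map (LinearMap.fst F V W)) + finrank F (X.comap (LinearMap.inr F V W)) := by
  have hker : finrank F (LinearMap.ker ((LinearMap.fst F V W).domRestrict X))
      = finrank F ((X.comap (LinearMap.inr F V W)).map (LinearMap.inr F V W)) := by
    rw [← finrank_map_subtype_eq, LinearMap.ker_domRestrict, map_comap_subtype, LinearMap.ker_fst,
      map_comap_eq, inf_comm]
  have hrank := LinearMap.finrank_range_add_finrank_ker ((LinearMap.fst F V W).domRestrict X)
  rw [LinearMap.range_domRestrict, hker] at hrank
  have hinr := finrank_map_le (LinearMap.inr F V W) (X.comap (LinearMap.inr F V W))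
  omega

end Submodule

namespace LinearMap.BilinForm

section CommSemiring

variable {R M N : Type*} [CommSemiring R] [AddCommMonoid M] [Module R M]
  [AddCommMonoid N] [Module R N]

def prod (β : BilinForm R M) (γ : BilinForm R N) : BilinForm R (M × N) :=
  β.comp (fst R M N) (fst R M N) + γ.comp (snd R M N) (snd R M N)

@[simp]
lemma prod_apply (β : BilinForm R M) (γ : BilinForm R N) (x y : M × N) :
    β.prod γ x y = β x.1 y.1 + γ x.2 y.2 :=
  rfl

def IsTotallyIsotropic (B : BilinForm R M) (L : Submodule R M) : Prop :=
  ∀ x ∈ L, ∀ y ∈ L, B x y = 0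

lemma isTotallyIsotropic_span {B : BilinForm R M} {s : Set M}
    (h : ∀ x ∈ s, ∀ y ∈ s, B x y = 0) : B.IsTotallyIsotropic (span R s) := by
  have hleft : ∀ x ∈ s, span R s ≤ ker (B x) := fun x hx => span_le.2 (h x hx)
  intro x hx y hy
  exact (span_le (p := ker (B.flip y))).2 (fun x' hx' => hleft x' hx' hy) hx

end CommSemiring

variable {F V W : Type*} [Field F] [AddCommGroup V] [Module F V] [AddCommGroup W] [Module F W]

def IsMetabolic (B : BilinForm F V) : Prop :=
  ∃ L : Submodule F V, finrank F V ≤ 2 * finrank F L ∧ B.IsTotallyIsotropic L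

lemma IsMetabolic.of_comp_linearEquiv {B : BilinForm F W} (e : V ≃ₗ[F] W)
    (h : (B.comp (e : V →ₗ[F] W) e).IsMetabolic) : B.IsMetabolic := by
  obtain ⟨L, hdim, hL⟩ := h
  refine ⟨L.map (e : V →ₗ[F] W), ?_, ?_⟩
  · rwa [e.finrank_map_eq, ← e.finrank_eq]
  · rintro _ ⟨x, hx, rfl⟩ _ ⟨y, hy, rfl⟩
    exact hL x hx y hy

variable {β : BilinForm F V} {γ : BilinForm F W} {H : Submodule F (V × W)} {U : Submodule F W}

lemma IsTotallyIsotropic.map_fst_inf_prod (hH : (β.prod γ).IsTotallyIsotropic H)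
    (hU : γ.IsTotallyIsotropic U) :
    β.IsTotallyIsotropic ((H ⊓ (⊤ : Submodule F V).prod U).map (LinearMap.fst F V W)) := by
  rintro _ ⟨x, ⟨hxH, hxU⟩, rfl⟩ _ ⟨y, ⟨hyH, hyU⟩, rfl⟩
  have h := hH x hxH y hyH
  rwa [prod_apply, hU _ (mem_prod.1 hxU).2 _ (mem_prod.1 hyU).2, add_zero] at h

lemma sup_prod_le_prod_orthogonal (hH : (β.prod γ).IsTotallyIsotropic H)
    (hU : γ.IsTotallyIsotropic U) (lam mu : F) :
    H ⊔ (⊤ : Submodule F V).prod U ≤ (⊤ : Submodule F V).prod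
      ((lam • γ + mu • γ.flip).orthogonal
        ((H ⊓ (⊤ : Submodule F V).prod U).comap (inr F V W))) := by
  refine sup_le (fun x hx => ?_) (fun x hx => ?_) <;>
    refine mem_prod.2 ⟨mem_top, mem_orthogonal_iff.2 fun c ⟨hcH, hcU⟩ => ?_⟩ <;>
    replace hcU : c ∈ U := (mem_prod.1 hcU).2
  · have h₁ := hH _ hcH x hx
    have h₂ := hH x hx _ hcH
    simp_all
  · have hxU : x.2 ∈ U := (mem_prod.1 hx).2
    simp [hU c hcU x.2 hxU, hU x.2 hxU c hcU]

variable [FiniteDimensional F V] [FiniteDimensional F W]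

lemma IsMetabolic.of_prod (h : (β.prod γ).IsMetabolic) (hγ : γ.IsMetabolic) {lam mu : F}
    (hτ : (lam • γ + mu • γ.flip).Nondegenerate) : β.IsMetabolic := by
  obtain ⟨H, hHdim, hH⟩ := h
  obtain ⟨U, hUdim, hU⟩ := hγ
  set S := (⊤ : Submodule F V).prod U
  set D := (H ⊓ S).comap (inr F V W)
  refine ⟨(H ⊓ S).map (fst F V W), ?_, hH.map_fst_inf_prod hU⟩
  have hsup : finrank F ↥(H ⊔ S) ≤ finrank F V + (finrank F W - finrank F D) := by
    have := Submodule.finrank_mono (sup_prod_le_prod_orthogonal hH hU lam mu)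
    rwa [Submodule.finrank_prod, finrank_top, finrank_orthogonal hτ] at this
  have hS : finrank F S = finrank F V + finrank F U := by
    rw [Submodule.finrank_prod, finrank_top]
  have hsupinf := Submodule.finrank_sup_add_finrank_inf_eq H S
  have hproj : finrank F ↥(H ⊓ S) ≤ finrank F ↥((H ⊓ S).map (fst F V W)) + finrank F D :=
    (H ⊓ S).finrank_le_finrank_map_fst_add_finrank_comap_inr
  have hD := D.finrank_le
  rw [Module.finrank_prod] at hHdim
  omega

end LinearMap.BilinForm

open LinearMap.BilinForm

section Matrix

lemma Matrix.toBilin'_col_col {R n : Type*} [CommRing R] [Fintype n] [DecidableEq n]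
    (M P : Matrix n n R) (i j : n) : toBilin' M (P.col i) (P.col j) = (Pᵀ * M * P) i j := by
  rw [← mulVec_single_one, ← mulVec_single_one, ← toLin'_apply, ← toLin'_apply,
    ← LinearMap.BilinForm.comp_apply, toBilin'_comp, toBilin'_single]

lemma Matrix.toBilin'_smul_add_smul_transpose {R n : Type*} [CommRing R] [Fintype n]
    [DecidableEq n] (N : Matrix n n R) (lam mu : R) :
    toBilin' (lam • N + mu • Nᵀ) = lam • toBilin' N + mu • (toBilin' N).flip := by
  refine LinearMap.ext₂ fun x y => ?_
  simp [toBilin'_apply', dotProduct_mulVec x Nᵀ, vecMul_transpose, dotProduct_comm]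

lemma Matrix.exists_toBilin'_blockSum_eq_comp {R : Type*} [CommRing R] {p q : ℕ}
    (A : Matrix (Fin p) (Fin p) R) (B : Matrix (Fin q) (Fin q) R) :
    ∃ e : (Fin (p + q) → R) ≃ₗ[R] (Fin p → R) × (Fin q → R),
      toBilin' (A.blockSum B) = ((toBilin' A).prod (toBilin' B)).comp e e := by
  refine ⟨(LinearEquiv.funCongrLeft R R finSumFinEquiv).trans
    (LinearEquiv.sumPiEquivProdPi R _ _ _), LinearMap.ext₂ fun x y => ?_⟩
  simp [toBilin'_apply, blockSum, ← finSumFinEquiv.sum_comp, Fintype.sum_sum_type]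

variable {F V : Type*} [Field F] [AddCommGroup V] [Module F V] [FiniteDimensional F V]

lemma Module.Basis.exists_fin_apply_mem (L : Submodule F V) {n : ℕ} (hn : finrank F V = n) :
    ∃ b : Basis (Fin n) F V, ∀ i : Fin n, (i : ℕ) < finrank F L → b i ∈ L := by
  obtain ⟨C, hC⟩ := L.exists_isCompl
  let b₀ := ((finBasis F L).prod (finBasis F C)).map (L.prodEquivOfIsCompl C hC)
  have hcard : finrank F L + finrank F C = n := hn ▸ finrank_add_eq_of_isCompl hC
  refine ⟨b₀.reindex (finSumFinEquiv.trans (finCongr hcard)), fun i hi => ?_⟩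
  have hi' : (finSumFinEquiv.trans (finCongr hcard)).symm i = Sum.inl ⟨i, hi⟩ := by
    rw [Equiv.symm_apply_eq]; ext; simp
  rw [Basis.reindex_apply, hi']
  simp [b₀]

theorem Matrix.isNullCobordant_iff_isMetabolic {n : ℕ} (M : Matrix (Fin n) (Fin n) F) :
    M.IsNullCobordant ↔ Even n ∧ (toBilin' M).IsMetabolic := by
  constructor
  · rintro ⟨r, rfl, P, hP, hzero⟩
    refine ⟨even_two_mul r, ?_⟩
    have hr : r ≤ 2 * r := by omega
    let v : Fin r → Fin (2 * r) → F := fun i => P.col (Fin.castLE hr i)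
    have hv : LinearIndependent F v :=
      (linearIndependent_cols_iff_isUnit.2 ((isUnit_iff_isUnit_det P).2 hP)).comp _
        (Fin.castLE_injective hr)
    refine ⟨span F (Set.range v), ?_, isTotallyIsotropic_span ?_⟩
    · rw [finrank_span_eq_card hv, Fintype.card_fin, finrank_fin_fun]
    · rintro _ ⟨i, rfl⟩ _ ⟨j, rfl⟩
      rw [toBilin'_col_col]
      exact hzero _ _ i.2 j.2
  · rintro ⟨⟨r, hr⟩, L, hdim, hL⟩
    obtain ⟨b, hb⟩ := Basis.exists_fin_apply_mem L (finrank_fin_fun F)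
    let P : Matrix (Fin n) (Fin n) F := of fun i j => b j i
    have hP : IsUnit P := linearIndependent_cols_iff_isUnit.1 b.linearIndependent
    refine ⟨r, by omega, P, (isUnit_iff_isUnit_det P).1 hP, fun i j hi hj => ?_⟩
    rw [finrank_fin_fun] at hdim
    rw [← toBilin'_col_col]
    exact hL _ (hb i (by omega)) _ (hb j (by omega))

end Matrix

/-- If `N` and `A ⊞ N` are rationally null-cobordant and some rational linear combination
`λN + μNᵀ` has nonzero determinant, then `A` is rationally null-cobordant. -/
theorem nullCobordant_of_blockSum_nullCobordant (a n : ℕ)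
    (A : Matrix (Fin (2 * a)) (Fin (2 * a)) ℚ)
    (N : Matrix (Fin (2 * n)) (Fin (2 * n)) ℚ)
    (hN : N.IsNullCobordant)
    (hAN : (A.blockSum N).IsNullCobordant)
    (hdet : ∃ lam mu : ℚ, (lam • N + mu • Nᵀ).det ≠ 0) :
    A.IsNullCobordant := by
  obtain ⟨lam, mu, hdet⟩ := hdet
  rw [isNullCobordant_iff_isMetabolic] at hN hAN ⊢
  obtain ⟨e, he⟩ := exists_toBilin'_blockSum_eq_comp A N
  have hsum : ((toBilin' A).prod (toBilin' N)).IsMetabolic :=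
    IsMetabolic.of_comp_linearEquiv e (he ▸ hAN.2)
  have hτ : (lam • toBilin' N + mu • (toBilin' N).flip).Nondegenerate := by
    rw [← toBilin'_smul_add_smul_transpose]
    exact nondegenerate_toBilin'_iff_det_ne_zero.2 hdet
  exact ⟨even_two_mul a, hsum.of_prod hN.2 hτ⟩
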